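/- Suppose δ₂ ≠ 0 and c = 1. A Frenet curve satisfying the system (i) -3δ₂k₁k₁′ = 0, (ii) δ₂(k₁″ - k₁³ - k₁k₂² + k₁) - δ₁k₁ = 0, (iii) δ₂(2k₁′k₂ + k₁k₂′) = 0, (iv) δ₂k₁k₂k₃ = 0, with k₁ > 0 everywhere, satisfies: k₁ and k₂ are constant, k₁² + k₂² = 1 - δ₁/δ₂, and k₂k₃ = 0. -/
import Mathlib


/-- Proposition 3.2, case `c = 1`: If `k₁ > 0` and the system
`-3δ₂k₁k₁′ = 0`, `δ₂(k₁″ - k₁³ - k₁k₂² + k₁) - δ₁k₁ = 0`, `δ₂(2k₁′k₂ + k₁k₂′) = 0`,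
`δ₂k₁k₂k₃ = 0` holds on `I` with `δ₂ ≠ 0`, then `k₁` and `k₂` are constant,
`k₁² + k₂² = 1 - δ₁/δ₂`, and `k₂k₃ = 0` on `I`. -/
theorem prop_c_eq_one
    (I : Set ℝ) (hopen : IsOpen I) (hconn : I.OrdConnected) (hne : I.Nonempty)
    (k₁ k₂ k₃ : ℝ → ℝ) (δ₁ δ₂ : ℝ) (hδ₂ : δ₂ ≠ 0)
    (hd1 : DifferentiableOn ℝ k₁ I) (hd1' : DifferentiableOn ℝ (deriv k₁) I)
    (hd2 : DifferentiableOn ℝ k₂ I)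
    (hk₁pos : ∀ t ∈ I, 0 < k₁ t)
    (heq1 : ∀ t ∈ I, -3 * δ₂ * k₁ t * deriv k₁ t = 0)
    (heq2 : ∀ t ∈ I, δ₂ * (deriv (deriv k₁) t - (k₁ t) ^ 3 - k₁ t * (k₂ t) ^ 2 + k₁ t)
      - δ₁ * k₁ t = 0)
    (heq3 : ∀ t ∈ I, δ₂ * (2 * deriv k₁ t * k₂ t + k₁ t * deriv k₂ t) = 0)
    (heq4 : ∀ t ∈ I, δ₂ * (k₁ t * k₂ t * k₃ t) = 0) :
    (∀ s ∈ I, ∀ t ∈ I, k₁ s = k₁ t) ∧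
    (∀ s ∈ I, ∀ t ∈ I, k₂ s = k₂ t) ∧
    (∀ t ∈ I, (k₁ t) ^ 2 + (k₂ t) ^ 2 = 1 - δ₁ / δ₂) ∧
    (∀ t ∈ I, k₂ t * k₃ t = 0) := by
  have hconv : Convex ℝ I := convex_iff_ordConnected.2 hconn
  have hderiv1 : ∀ t ∈ I, deriv k₁ t = 0 := by
    intro t ht
    have h := heq1 t ht
    have hk := (hk₁pos t ht).ne'
    have h3 : (-3 * δ₂ * k₁ t) ≠ 0 := by
      simp only [mul_ne_zero_iff]
      exact ⟨⟨by norm_num, hδ₂⟩, hk⟩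
    exact (mul_eq_zero.1 h).resolve_left h3
  have hderiv2 : ∀ t ∈ I, deriv (deriv k₁) t = 0 := by
    intro t ht
    have hev : deriv k₁ =ᶠ[nhds t] (fun _ => (0:ℝ)) :=
      Filter.eventuallyEq_of_mem (hopen.mem_nhds ht) hderiv1
    rw [hev.deriv_eq, deriv_const]
  have hderiv3 : ∀ t ∈ I, deriv k₂ t = 0 := by
    intro t ht
    have h := heq3 t ht
    rw [hderiv1 t ht] at h
    have hk := (hk₁pos t ht).ne'
    have h' : δ₂ * k₁ t * deriv k₂ t = 0 := by ring_nf; ring_nf at h; linarith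
    exact (mul_eq_zero.1 h').resolve_left (mul_ne_zero hδ₂ hk)
  have const_of : ∀ f : ℝ → ℝ, DifferentiableOn ℝ f I → (∀ t ∈ I, deriv f t = 0) →
      ∀ s ∈ I, ∀ t ∈ I, f s = f t := by
    intro f hdf hdf0 s hs t ht
    refine hconv.is_const_of_fderivWithin_eq_zero hdf (fun x hx => ?_) hs ht
    rw [fderivWithin_of_isOpen hopen hx]
    ext
    rw [ContinuousLinearMap.zero_apply, fderiv_apply_one_eq_deriv, hdf0 x hx]
  refine ⟨const_of k₁ hd1 hderiv1, const_of k₂ hd2 hderiv3, ?_, ?_⟩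
  · intro t ht
    have h := heq2 t ht
    rw [hderiv2 t ht] at h
    have hk := hk₁pos t ht
    field_simp
    nlinarith [h, hk]
  · intro t ht
    have h := heq4 t ht
    have hk := (hk₁pos t ht).ne'
    have h' : (δ₂ * k₁ t) * (k₂ t * k₃ t) = 0 := by linarith [h]; 
    exact (mul_eq_zero.1 h').resolve_left (mul_ne_zero hδ₂ hk)
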